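/- arXiv:math/9809084 — 3 statements merged into one kernel-verified Lean document; each statement's English description precedes it below -/
import Mathlib

section
/- Let k be a commutative ring, n a positive integer, M = k^n free with basis m₁,…,m_n, and x^{ij}_{uv} ∈ k a family of scalars determining the k-linear map R: M⊗M → M⊗M, R(m_u⊗m_v) = Σ_{i,j} x^{ij}_{uv} m_i⊗m_j. Then R satisfies R¹²R²³ = R¹³R¹² on M⊗M⊗M if and only if the k-bilinear multiplication on M⊗M determined on basis elements by (m_k⊗m_l)·(m_r⊗m_j) := Σ_a x^{ak}_{jl} m_r⊗m_a is associative. In this case M is a left module over the (possibly non-unital) algebra M⊗M via (m_k⊗m_l)•m_j := Σ_a x^{ak}_{jl} m_a. -/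
open TensorProduct

variable {k M : Type*} [CommRing k] [AddCommGroup M] [Module k M]

/-- `R¹² = R ⊗ I` on `M ⊗ M ⊗ M`. -/
noncomputable def leg12 (R : M ⊗[k] M →ₗ[k] M ⊗[k] M) :
    M ⊗[k] (M ⊗[k] M) →ₗ[k] M ⊗[k] (M ⊗[k] M) :=
  (TensorProduct.assoc k M M M).toLinearMap ∘ₗ
    (TensorProduct.map R LinearMap.id) ∘ₗ (TensorProduct.assoc k M M M).symm.toLinearMap

/-- `R²³ = I ⊗ R` on `M ⊗ M ⊗ M`. -/
noncomputable def leg23 (R : M ⊗[k] M →ₗ[k] M ⊗[k] M) :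
    M ⊗[k] (M ⊗[k] M) →ₗ[k] M ⊗[k] (M ⊗[k] M) :=
  TensorProduct.map LinearMap.id R

/-- `R¹³ = (I ⊗ τ) ∘ (R ⊗ I) ∘ (I ⊗ τ)` on `M ⊗ M ⊗ M`. -/
noncomputable def leg13 (R : M ⊗[k] M →ₗ[k] M ⊗[k] M) :
    M ⊗[k] (M ⊗[k] M) →ₗ[k] M ⊗[k] (M ⊗[k] M) :=
  (TensorProduct.map LinearMap.id (TensorProduct.comm k M M).toLinearMap) ∘ₗ
    leg12 R ∘ₗ (TensorProduct.map LinearMap.id (TensorProduct.comm k M M).toLinearMap)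

/-! On basis vectors `(m_k ⊗ m_l)·(m_r ⊗ m_j) = m_r ⊗ ((m_k ⊗ m_l) • m_j)`, so left multiplication
by `ξ` is `I ⊗ (ξ • -)`. Hence the multiplication is associative iff `(ξ·η) • m = ξ • (η • m)`:
one direction is formal, and for the other one contracts the first tensor factor against a
coordinate functional, which exists as `n > 0`. Evaluated on basis vectors, this module
condition and `R¹²R²³ = R¹³R¹²` both say that the structure constants satisfy the same
quadratic identity `Eq1213Coeff`. -/

section ActMul

variable {ι κ A N : Type*} [AddCommGroup A] [Module k A] [AddCommGroup N] [Module k N]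

theorem act_mul_eq_of_basis (bA : Module.Basis ι k A) (bM : Module.Basis κ k M)
    (mul : A →ₗ[k] A →ₗ[k] A) (act : A →ₗ[k] M →ₗ[k] M)
    (h : ∀ i j l, act (mul (bA i) (bA j)) (bM l) = act (bA i) (act (bA j) (bM l)))
    (ξ η : A) (m : M) : act (mul ξ η) m = act ξ (act η m) := by
  have : LinearMap.llcomp k A A (M →ₗ[k] M) act ∘ₗ mul =
      (LinearMap.llcomp k M M M).compl₁₂ act act :=
    LinearMap.ext_basis bA bA fun i j => bM.ext fun l => h i j l
  exact congr($this ξ η m)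

theorem mul_assoc_iff_act_mul_of_eq_lTensor
    (mul : N ⊗[k] M →ₗ[k] N ⊗[k] M →ₗ[k] N ⊗[k] M) (act : N ⊗[k] M →ₗ[k] M →ₗ[k] M)
    (hmul : ∀ ξ, mul ξ = (act ξ).lTensor N) (φ : N →ₗ[k] k) (n₀ : N) (hφ : φ n₀ = 1) :
    (∀ ξ η ζ, mul (mul ξ η) ζ = mul ξ (mul η ζ)) ↔
      ∀ ξ η m, act (mul ξ η) m = act ξ (act η m) := by
  constructor
  · intro h ξ η m
    simpa [hmul, hφ] using congr(TensorProduct.lid k M (φ.rTensor M $(h ξ η (n₀ ⊗ₜ m))))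
  · intro h ξ η ζ
    rw [hmul (mul ξ η), (LinearMap.ext (h ξ η) : act (mul ξ η) = act ξ ∘ₗ act η),
      LinearMap.lTensor_comp_apply, ← hmul, ← hmul]

end ActMul

/-- The two sides are the coefficients of `m_p ⊗ m_b ⊗ m_c` in `R¹²R²³ (m_u ⊗ m_v ⊗ m_w)` and in
`R¹³R¹² (m_u ⊗ m_v ⊗ m_w)`. -/
def Eq1213Coeff {ι : Type*} [Fintype ι] (x : ι → ι → ι → ι → k) : Prop :=
  ∀ u v w p b c : ι, ∑ i, x i c v w * x p b u i = ∑ i, x i b u v * x p c i w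

section Legs

variable {ι : Type*} [Fintype ι]

local notation "e" => Pi.basisFun k ι

variable {x : ι → ι → ι → ι → k} {R : (ι → k) ⊗[k] (ι → k) →ₗ[k] (ι → k) ⊗[k] (ι → k)}
  (hR : ∀ u v : ι, R (Pi.basisFun k ι u ⊗ₜ[k] Pi.basisFun k ι v) =
    ∑ i, ∑ j, x i j u v • (Pi.basisFun k ι i ⊗ₜ[k] Pi.basisFun k ι j))
include hR

theorem leg12_basisFun (u v w : ι) :
    leg12 R (e u ⊗ₜ[k] (e v ⊗ₜ[k] e w)) = ∑ i, ∑ j, x i j u v • (e i ⊗ₜ[k] (e j ⊗ₜ[k] e w)) := by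
  simp only [leg12, LinearMap.coe_comp, LinearEquiv.coe_coe, Function.comp_apply,
    TensorProduct.assoc_symm_tmul, TensorProduct.map_tmul, LinearMap.id_coe, id_eq, hR,
    TensorProduct.sum_tmul, TensorProduct.smul_tmul', map_sum, TensorProduct.assoc_tmul]

theorem leg23_basisFun (u v w : ι) :
    leg23 R (e u ⊗ₜ[k] (e v ⊗ₜ[k] e w)) = ∑ i, ∑ j, x i j v w • (e u ⊗ₜ[k] (e i ⊗ₜ[k] e j)) := by
  simp only [leg23, TensorProduct.map_tmul, LinearMap.id_coe, id_eq, hR,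
    TensorProduct.tmul_sum, TensorProduct.tmul_smul]

theorem leg13_basisFun (u v w : ι) :
    leg13 R (e u ⊗ₜ[k] (e v ⊗ₜ[k] e w)) = ∑ i, ∑ j, x i j u w • (e i ⊗ₜ[k] (e v ⊗ₜ[k] e j)) := by
  simp only [leg13, leg12, LinearMap.coe_comp, LinearEquiv.coe_coe, Function.comp_apply,
    TensorProduct.map_tmul, LinearMap.id_coe, id_eq, TensorProduct.comm_tmul,
    TensorProduct.assoc_symm_tmul, hR, TensorProduct.sum_tmul, TensorProduct.smul_tmul',
    map_sum, map_smul, TensorProduct.assoc_tmul]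

theorem repr_leg12_comp_leg23 (u v w p b c : ι) :
    ((e).tensorProduct ((e).tensorProduct e)).repr
      ((leg12 R ∘ₗ leg23 R) (e u ⊗ₜ[k] (e v ⊗ₜ[k] e w))) (p, b, c) =
      ∑ i, x i c v w * x p b u i := by
  classical
  rw [LinearMap.comp_apply, leg23_basisFun hR]
  simp only [map_sum, map_smul, leg12_basisFun hR]
  simp [Module.Basis.tensorProduct_repr_tmul_apply, Pi.single_apply, Finset.sum_apply']

theorem repr_leg13_comp_leg12 (u v w p b c : ι) :
    ((e).tensorProduct ((e).tensorProduct e)).repr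
      ((leg13 R ∘ₗ leg12 R) (e u ⊗ₜ[k] (e v ⊗ₜ[k] e w))) (p, b, c) =
      ∑ i, x i b u v * x p c i w := by
  classical
  rw [LinearMap.comp_apply, leg12_basisFun hR]
  simp only [map_sum, map_smul, leg13_basisFun hR]
  simp [Module.Basis.tensorProduct_repr_tmul_apply, Pi.single_apply, Finset.sum_apply']

theorem leg12_comp_leg23_eq_iff : leg12 R ∘ₗ leg23 R = leg13 R ∘ₗ leg12 R ↔ Eq1213Coeff x := by
  refine ⟨fun h u v w p b c => ?_, fun h => ?_⟩
  · rw [← repr_leg12_comp_leg23 hR, ← repr_leg13_comp_leg12 hR, h]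
  · refine ((e).tensorProduct ((e).tensorProduct e)).ext fun ⟨u, v, w⟩ =>
      (Module.Basis.ext_elem_iff ((e).tensorProduct ((e).tensorProduct e))).2 fun ⟨p, b, c⟩ => ?_
    simp only [Module.Basis.tensorProduct_apply]
    rw [repr_leg12_comp_leg23 hR, repr_leg13_comp_leg12 hR]
    exact h u v w p b c

end Legs

section Action

variable {ι : Type*} [Fintype ι]

local notation "e" => Pi.basisFun k ι

variable {x : ι → ι → ι → ι → k}
  {mul : (ι → k) ⊗[k] (ι → k) →ₗ[k] (ι → k) ⊗[k] (ι → k) →ₗ[k] (ι → k) ⊗[k] (ι → k)}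
  {act : (ι → k) ⊗[k] (ι → k) →ₗ[k] (ι → k) →ₗ[k] (ι → k)}
  (hmul : ∀ p q r j : ι, mul (Pi.basisFun k ι p ⊗ₜ[k] Pi.basisFun k ι q)
      (Pi.basisFun k ι r ⊗ₜ[k] Pi.basisFun k ι j) =
    ∑ a, x a p j q • (Pi.basisFun k ι r ⊗ₜ[k] Pi.basisFun k ι a))
  (hact : ∀ p q j : ι, act (Pi.basisFun k ι p ⊗ₜ[k] Pi.basisFun k ι q) (Pi.basisFun k ι j) =
    ∑ a, x a p j q • Pi.basisFun k ι a)

include hmul hact in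
theorem mul_eq_lTensor_act (ξ : (ι → k) ⊗[k] (ι → k)) : mul ξ = (act ξ).lTensor (ι → k) := by
  suffices mul = LinearMap.lTensorHom (ι → k) ∘ₗ act from congr($this ξ)
  refine LinearMap.ext_basis ((e).tensorProduct e) ((e).tensorProduct e) fun ⟨p, q⟩ ⟨r, j⟩ => ?_
  simp only [Module.Basis.tensorProduct_apply, LinearMap.comp_apply, LinearMap.coe_lTensorHom,
    LinearMap.lTensor_tmul, hmul, hact, TensorProduct.tmul_sum, TensorProduct.tmul_smul]

include hact in
theorem act_act_basisFun_apply (p q r s t b : ι) :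
    act (e p ⊗ₜ[k] e q) (act (e r ⊗ₜ[k] e s) (e t)) b = ∑ a, x a r t s * x b p a q := by
  classical
  simp only [hact, map_sum, map_smul]
  simp [Pi.single_apply]

include hmul hact in
theorem act_mul_basisFun_apply (p q r s t b : ι) :
    act (mul (e p ⊗ₜ[k] e q) (e r ⊗ₜ[k] e s)) (e t) b = ∑ a, x a p s q * x b r t a := by
  classical
  simp only [hmul, hact, map_sum, map_smul, LinearMap.sum_apply, LinearMap.smul_apply]
  simp [Pi.single_apply]

include hmul hact in
theorem act_mul_iff_eq1213Coeff :
    (∀ ξ η m, act (mul ξ η) m = act ξ (act η m)) ↔ Eq1213Coeff x := by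
  refine ⟨fun h t s q b r p => ?_, fun h => ?_⟩
  · rw [← act_mul_basisFun_apply hmul hact, ← act_act_basisFun_apply hact, h]
  · refine act_mul_eq_of_basis ((e).tensorProduct e) e mul act fun ⟨p, q⟩ ⟨r, s⟩ t => ?_
    ext b
    simp only [Module.Basis.tensorProduct_apply]
    rw [act_mul_basisFun_apply hmul hact, act_act_basisFun_apply hact]
    exact h t s q b r p

end Action

/-- `R¹²R²³ = R¹³R¹²` holds iff the multiplication
`(m_k ⊗ m_l)·(m_r ⊗ m_j) = Σ_a x^{ak}_{jl} m_r ⊗ m_a` on `M ⊗ M` is associative;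
and in that case `M` is a left module over `M ⊗ M` via
`(m_k ⊗ m_l) • m_j = Σ_a x^{ak}_{jl} m_a`. -/
theorem equation_1213_iff_associative
    {n : ℕ} (hn : 0 < n) (x : Fin n → Fin n → Fin n → Fin n → k)
    (R : (Fin n → k) ⊗[k] (Fin n → k) →ₗ[k] (Fin n → k) ⊗[k] (Fin n → k))
    (hR : ∀ u v : Fin n,
      R ((Pi.basisFun k (Fin n)) u ⊗ₜ[k] (Pi.basisFun k (Fin n)) v) =
        ∑ i, ∑ j, x i j u v • ((Pi.basisFun k (Fin n)) i ⊗ₜ[k] (Pi.basisFun k (Fin n)) j))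
    (mul : (Fin n → k) ⊗[k] (Fin n → k) →ₗ[k]
      (Fin n → k) ⊗[k] (Fin n → k) →ₗ[k] (Fin n → k) ⊗[k] (Fin n → k))
    (hmul : ∀ p q r j : Fin n,
      mul ((Pi.basisFun k (Fin n)) p ⊗ₜ[k] (Pi.basisFun k (Fin n)) q)
          ((Pi.basisFun k (Fin n)) r ⊗ₜ[k] (Pi.basisFun k (Fin n)) j) =
        ∑ a, x a p j q • ((Pi.basisFun k (Fin n)) r ⊗ₜ[k] (Pi.basisFun k (Fin n)) a))
    (act : (Fin n → k) ⊗[k] (Fin n → k) →ₗ[k] (Fin n → k) →ₗ[k] (Fin n → k))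
    (hact : ∀ p q j : Fin n,
      act ((Pi.basisFun k (Fin n)) p ⊗ₜ[k] (Pi.basisFun k (Fin n)) q)
          ((Pi.basisFun k (Fin n)) j) =
        ∑ a, x a p j q • (Pi.basisFun k (Fin n)) a) :
    ((leg12 R ∘ₗ leg23 R = leg13 R ∘ₗ leg12 R) ↔
      (∀ ξ η ζ : (Fin n → k) ⊗[k] (Fin n → k), mul (mul ξ η) ζ = mul ξ (mul η ζ))) ∧
    ((leg12 R ∘ₗ leg23 R = leg13 R ∘ₗ leg12 R) →
      ∀ (ξ η : (Fin n → k) ⊗[k] (Fin n → k)) (m : Fin n → k),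
        act (mul ξ η) m = act ξ (act η m)) := by
  rw [leg12_comp_leg23_eq_iff hR,
    mul_assoc_iff_act_mul_of_eq_lTensor mul act (mul_eq_lTensor_act hmul hact)
      ((Pi.basisFun k (Fin n)).coord ⟨0, hn⟩) (Pi.basisFun k (Fin n) ⟨0, hn⟩) (by simp),
    act_mul_iff_eq1213Coeff hmul hact]
  exact ⟨Iff.rfl, id⟩
end

section
/- Let k be a commutative ring, C a k-coalgebra with comultiplication Δ(c) = Σ c₁⊗c₂ and counit ε, and σ: C⊗C → k a k-linear FS-map, i.e. Σ σ(c⊗d₁)d₂ = Σ σ(c₂⊗d)c₁ in C for all c,d ∈ C. Let M be a right C-comodule: a k-module with a k-linear coaction ρ: M → M⊗C, ρ(m) = Σ m₀⊗m₁, satisfying (ρ⊗I_C)∘ρ = (I_M⊗Δ)∘ρ and (I_M⊗ε)∘ρ = I_M. Then the k-linear map R_σ: M⊗M → M⊗M, R_σ(m⊗n) = Σ σ(m₁⊗n₁) m₀⊗n₀, satisfies the FS-equation R_σ¹²R_σ²³ = R_σ²³R_σ¹³ = R_σ¹³R_σ¹² on M⊗M⊗M. -/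
open TensorProduct

variable {k M : Type*} [CommRing k] [AddCommGroup M] [Module k M]

/-!
Each of `R¹²R²³`, `R²³R¹³`, `R¹³R¹²` sends `m ⊗ n ⊗ p` to `Σ F(m₁ ⊗ n₁ ⊗ p₁) m₀ ⊗ n₀ ⊗ p₀`,
where coassociativity of `ρ` identifies the functional `F` as, respectively,
`Σ σ(x ⊗ y₁) σ(y₂ ⊗ z)`, `Σ σ(y ⊗ z₁) σ(x ⊗ z₂)` and `Σ σ(x₂ ⊗ y) σ(x₁ ⊗ z)`.
The FS condition `Σ σ(c ⊗ d₁) d₂ = Σ σ(c₂ ⊗ d) c₁`, applied to `(y, z)` and to `(x, y)`,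
shows that the three functionals coincide.
-/

namespace FSEquation

open LinearMap (lTensor rTensor)

section Contraction

variable {C A B G M₁ M₂ M₃ : Type*} [AddCommGroup C] [Module k C]
  [AddCommGroup A] [Module k A] [AddCommGroup B] [Module k B] [AddCommGroup G] [Module k G]
  [AddCommGroup M₁] [Module k M₁] [AddCommGroup M₂] [Module k M₂] [AddCommGroup M₃] [Module k M₃]

noncomputable def contract (σ : C ⊗[k] C →ₗ[k] k) :
    (M₁ ⊗[k] C) ⊗[k] (M₂ ⊗[k] C) →ₗ[k] M₁ ⊗[k] M₂ :=
  (TensorProduct.rid k (M₁ ⊗[k] M₂)).toLinearMap ∘ₗ lTensor _ σ ∘ₗ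
    (tensorTensorTensorComm k M₁ C M₂ C).toLinearMap

@[simp] lemma contract_tmul (σ : C ⊗[k] C →ₗ[k] k) (a : M₁) (x : C) (b : M₂) (y : C) :
    contract σ ((a ⊗ₜ x) ⊗ₜ (b ⊗ₜ y)) = σ (x ⊗ₜ y) • (a ⊗ₜ[k] b) := by
  simp [contract]

noncomputable def contract₃ (F : A ⊗[k] (B ⊗[k] G) →ₗ[k] k) :
    (M₁ ⊗[k] A) ⊗[k] ((M₂ ⊗[k] B) ⊗[k] (M₃ ⊗[k] G)) →ₗ[k] M₁ ⊗[k] (M₂ ⊗[k] M₃) :=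
  (TensorProduct.rid k _).toLinearMap ∘ₗ lTensor _ F ∘ₗ
    (tensorTensorTensorComm k M₁ A (M₂ ⊗[k] M₃) (B ⊗[k] G)).toLinearMap ∘ₗ
    lTensor _ (tensorTensorTensorComm k M₂ B M₃ G).toLinearMap

@[simp] lemma contract₃_tmul (F : A ⊗[k] (B ⊗[k] G) →ₗ[k] k) (a : M₁) (x : A) (b : M₂) (y : B)
    (c : M₃) (z : G) :
    contract₃ F ((a ⊗ₜ x) ⊗ₜ ((b ⊗ₜ y) ⊗ₜ (c ⊗ₜ z))) = F (x ⊗ₜ (y ⊗ₜ z)) • (a ⊗ₜ[k] (b ⊗ₜ c)) := by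
  simp [contract₃]

lemma contract₃_comp_map {A' B' G' : Type*} [AddCommGroup A'] [Module k A'] [AddCommGroup B']
    [Module k B'] [AddCommGroup G'] [Module k G'] (F : A ⊗[k] (B ⊗[k] G) →ₗ[k] k)
    (f : A' →ₗ[k] A) (g : B' →ₗ[k] B) (h : G' →ₗ[k] G) :
    contract₃ F ∘ₗ map (lTensor M₁ f) (map (lTensor M₂ g) (lTensor M₃ h)) =
      contract₃ (F ∘ₗ map f (map g h)) := by
  ext; simp

end Contraction

section Hits

variable {C : Type*} [AddCommGroup C] [Module k C] (σ : C ⊗[k] C →ₗ[k] k)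

noncomputable def leftHit : C ⊗[k] (C ⊗[k] C) →ₗ[k] C :=
  (TensorProduct.lid k C).toLinearMap ∘ₗ rTensor C σ ∘ₗ
    (TensorProduct.assoc k C C C).symm.toLinearMap

noncomputable def rightHit : (C ⊗[k] C) ⊗[k] C →ₗ[k] C :=
  (TensorProduct.rid k C).toLinearMap ∘ₗ lTensor C σ ∘ₗ (TensorProduct.assoc k C C C).toLinearMap

@[simp] lemma leftHit_tmul (x y z : C) : leftHit σ (x ⊗ₜ (y ⊗ₜ z)) = σ (x ⊗ₜ y) • z := by
  simp [leftHit]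

@[simp] lemma rightHit_tmul (x y z : C) : rightHit σ ((x ⊗ₜ y) ⊗ₜ z) = σ (y ⊗ₜ z) • x := by
  simp [rightHit]

lemma comp_rTensor_leftHit_comp_lTensor (g : C →ₗ[k] C ⊗[k] C) :
    σ ∘ₗ rTensor C (leftHit σ ∘ₗ lTensor C g) ∘ₗ (TensorProduct.assoc k C C C).symm.toLinearMap =
      σ ∘ₗ lTensor C (rightHit σ ∘ₗ rTensor C g) := by
  refine TensorProduct.ext_threefold' fun x y z => ?_
  simp only [LinearMap.comp_apply, LinearEquiv.coe_coe, TensorProduct.assoc_symm_tmul,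
    LinearMap.rTensor_tmul, LinearMap.lTensor_tmul]
  induction g y using TensorProduct.induction_on with
  | zero => simp
  | tmul y y' => simp [← smul_tmul', tmul_smul, mul_comm]
  | add w w' hw hw' => simp [tmul_add, add_tmul, hw, hw']

variable [Coalgebra k C]

/-- `Σ σ(c ⊗ d₁) d₂ = Σ σ(c₂ ⊗ d) c₁`. -/
def IsFSMap : Prop :=
  leftHit σ ∘ₗ lTensor C Coalgebra.comul = rightHit σ ∘ₗ rTensor C Coalgebra.comul

lemma isFSMap_of_apply
    (hσ : ∀ c d : C,
      (TensorProduct.lid k C)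
          (map (σ ∘ₗ TensorProduct.mk k C C c) LinearMap.id (Coalgebra.comul d)) =
        (TensorProduct.rid k C)
          (map LinearMap.id (σ ∘ₗ (TensorProduct.mk k C C).flip d) (Coalgebra.comul c))) :
    IsFSMap σ := by
  have hl (c : C) (w : C ⊗[k] C) :
      leftHit σ (c ⊗ₜ w) =
        TensorProduct.lid k C (map (σ ∘ₗ TensorProduct.mk k C C c) LinearMap.id w) := by
    induction w using TensorProduct.induction_on <;> simp_all [tmul_add]
  have hr (w : C ⊗[k] C) (d : C) :
      rightHit σ (w ⊗ₜ d) =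
        TensorProduct.rid k C (map LinearMap.id (σ ∘ₗ (TensorProduct.mk k C C).flip d) w) := by
    induction w using TensorProduct.induction_on <;> simp_all [add_tmul]
  refine TensorProduct.ext' fun c d => ?_
  simpa [hl, hr] using hσ c d

variable {σ} in
lemma IsFSMap.comp_rTensor_rightHit (hσ : IsFSMap σ) :
    σ ∘ₗ rTensor C (rightHit σ ∘ₗ rTensor C Coalgebra.comul) ∘ₗ
        (TensorProduct.assoc k C C C).symm.toLinearMap =
      σ ∘ₗ lTensor C (leftHit σ ∘ₗ lTensor C Coalgebra.comul) := by
  rw [← hσ, comp_rTensor_leftHit_comp_lTensor, hσ]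

end Hits

section Operators

variable {C : Type*} [AddCommGroup C] [Module k C]

@[simp] lemma leg12_tmul (R : M ⊗[k] M →ₗ[k] M ⊗[k] M) (a b c : M) :
    leg12 R (a ⊗ₜ (b ⊗ₜ c)) = TensorProduct.assoc k M M M (R (a ⊗ₜ b) ⊗ₜ c) := by
  simp [leg12]

@[simp] lemma leg23_tmul (R : M ⊗[k] M →ₗ[k] M ⊗[k] M) (a : M) (t : M ⊗[k] M) :
    leg23 R (a ⊗ₜ t) = a ⊗ₜ R t :=
  rfl

@[simp] lemma leg13_tmul (R : M ⊗[k] M →ₗ[k] M ⊗[k] M) (a b c : M) :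
    leg13 R (a ⊗ₜ (b ⊗ₜ c)) =
      lTensor M (TensorProduct.comm k M M) (TensorProduct.assoc k M M M (R (a ⊗ₜ c) ⊗ₜ b)) := by
  simp [leg13, leg12, LinearMap.lTensor]

variable (σ : C ⊗[k] C →ₗ[k] k) (ρ : M →ₗ[k] M ⊗[k] C)

noncomputable def fsOperator : M ⊗[k] M →ₗ[k] M ⊗[k] M := contract σ ∘ₗ map ρ ρ

@[simp] lemma fsOperator_tmul (m n : M) : fsOperator σ ρ (m ⊗ₜ n) = contract σ (ρ m ⊗ₜ ρ n) :=
  rfl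

/-- `m ⊗ n ⊗ p ↦ Σ F(m₁ ⊗ n₁ ⊗ p₁) m₀ ⊗ n₀ ⊗ p₀`. -/
noncomputable def diagonalAct (F : C ⊗[k] (C ⊗[k] C) →ₗ[k] k) :
    M ⊗[k] (M ⊗[k] M) →ₗ[k] M ⊗[k] (M ⊗[k] M) :=
  contract₃ F ∘ₗ map ρ (map ρ ρ)

variable [Coalgebra k C]

def IsCoassociative : Prop :=
  (TensorProduct.assoc k M C C).toLinearMap ∘ₗ rTensor C ρ ∘ₗ ρ = lTensor M Coalgebra.comul ∘ₗ ρ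

variable {ρ} in
lemma IsCoassociative.assoc_rTensor_apply (hρ : IsCoassociative ρ) (m : M) :
    TensorProduct.assoc k M C C (rTensor C ρ (ρ m)) = lTensor M Coalgebra.comul (ρ m) :=
  LinearMap.congr_fun hρ m

lemma leg12_comp_leg23 (hρ : IsCoassociative ρ) :
    leg12 (fsOperator σ ρ) ∘ₗ leg23 (fsOperator σ ρ) =
      diagonalAct ρ (σ ∘ₗ lTensor C (rightHit σ ∘ₗ rTensor C Coalgebra.comul)) := by
  have key (m : M) (u v : M ⊗[k] C) :
      leg12 (fsOperator σ ρ) (m ⊗ₜ contract σ (u ⊗ₜ v)) =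
        contract₃ (σ ∘ₗ lTensor C (rightHit σ))
          (ρ m ⊗ₜ (TensorProduct.assoc k M C C (rTensor C ρ u) ⊗ₜ v)) := by
    induction u using TensorProduct.induction_on with
    | zero => simp
    | add => simp_all [add_tmul, tmul_add]
    | tmul b y =>
      induction v using TensorProduct.induction_on with
      | zero => simp
      | add => simp_all [tmul_add]
      | tmul c z =>
        simp only [contract_tmul, tmul_smul, map_smul, leg12_tmul, fsOperator_tmul,
          LinearMap.rTensor_tmul]
        induction ρ m using TensorProduct.induction_on with
        | zero => simp
        | add => simp_all [add_tmul]
        | tmul a x =>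
          induction ρ b using TensorProduct.induction_on with
          | zero => simp
          | add => simp_all [add_tmul, tmul_add]
          | tmul b' y' => simp [← smul_tmul', smul_smul]
  refine TensorProduct.ext_threefold' fun m n p => ?_
  have h := LinearMap.congr_fun (contract₃_comp_map (σ ∘ₗ lTensor C (rightHit σ)) LinearMap.id
    Coalgebra.comul LinearMap.id) (ρ m ⊗ₜ (ρ n ⊗ₜ ρ p))
  simp only [LinearMap.comp_apply, map_tmul, LinearMap.lTensor_id, LinearMap.id_apply] at h
  rw [LinearMap.comp_apply, leg23_tmul, fsOperator_tmul, key, hρ.assoc_rTensor_apply, h,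
    LinearMap.lTensor_comp]
  rfl

lemma leg23_comp_leg13 (hρ : IsCoassociative ρ) :
    leg23 (fsOperator σ ρ) ∘ₗ leg13 (fsOperator σ ρ) =
      diagonalAct ρ (σ ∘ₗ lTensor C (leftHit σ ∘ₗ lTensor C Coalgebra.comul)) := by
  have key (n : M) (u v : M ⊗[k] C) :
      leg23 (fsOperator σ ρ)
          (lTensor M (TensorProduct.comm k M M)
            (TensorProduct.assoc k M M M (contract σ (u ⊗ₜ v) ⊗ₜ n))) =
        contract₃ (σ ∘ₗ lTensor C (leftHit σ))
          (u ⊗ₜ (ρ n ⊗ₜ TensorProduct.assoc k M C C (rTensor C ρ v))) := by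
    induction u using TensorProduct.induction_on with
    | zero => simp
    | add => simp_all [add_tmul]
    | tmul a x =>
      induction v using TensorProduct.induction_on with
      | zero => simp
      | add => simp_all [add_tmul, tmul_add]
      | tmul c z =>
        simp only [contract_tmul, ← smul_tmul', map_smul, TensorProduct.assoc_tmul,
          LinearMap.lTensor_tmul, LinearEquiv.coe_coe, TensorProduct.comm_tmul, leg23_tmul,
          fsOperator_tmul, LinearMap.rTensor_tmul]
        induction ρ n using TensorProduct.induction_on with
        | zero => simp
        | add => simp_all [add_tmul, tmul_add]
        | tmul b y =>
          induction ρ c using TensorProduct.induction_on with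
          | zero => simp
          | add => simp_all [add_tmul, tmul_add]
          | tmul c' z' => simp [smul_smul, mul_comm]
  refine TensorProduct.ext_threefold' fun m n p => ?_
  have h := LinearMap.congr_fun (contract₃_comp_map (σ ∘ₗ lTensor C (leftHit σ)) LinearMap.id
    LinearMap.id Coalgebra.comul) (ρ m ⊗ₜ (ρ n ⊗ₜ ρ p))
  simp only [LinearMap.comp_apply, map_tmul, LinearMap.lTensor_id, LinearMap.id_apply] at h
  rw [LinearMap.comp_apply, leg13_tmul, fsOperator_tmul, key, hρ.assoc_rTensor_apply, h,
    LinearMap.lTensor_comp]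
  rfl

lemma leg13_comp_leg12 (hρ : IsCoassociative ρ) :
    leg13 (fsOperator σ ρ) ∘ₗ leg12 (fsOperator σ ρ) =
      diagonalAct ρ (σ ∘ₗ rTensor C (rightHit σ ∘ₗ rTensor C Coalgebra.comul) ∘ₗ
        (TensorProduct.assoc k C C C).symm.toLinearMap) := by
  have key (p : M) (u v : M ⊗[k] C) :
      leg13 (fsOperator σ ρ) (TensorProduct.assoc k M M M (contract σ (u ⊗ₜ v) ⊗ₜ p)) =
        contract₃
          (σ ∘ₗ rTensor C (rightHit σ) ∘ₗ (TensorProduct.assoc k (C ⊗[k] C) C C).symm.toLinearMap)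
          (TensorProduct.assoc k M C C (rTensor C ρ u) ⊗ₜ (v ⊗ₜ ρ p)) := by
    induction u using TensorProduct.induction_on with
    | zero => simp
    | add => simp_all [add_tmul]
    | tmul a x =>
      induction v using TensorProduct.induction_on with
      | zero => simp
      | add => simp_all [add_tmul, tmul_add]
      | tmul b y =>
        simp only [contract_tmul, ← smul_tmul', map_smul, TensorProduct.assoc_tmul, leg13_tmul,
          fsOperator_tmul, LinearMap.rTensor_tmul]
        induction ρ a using TensorProduct.induction_on with
        | zero => simp
        | add => simp_all [add_tmul]
        | tmul a' x' =>
          induction ρ p using TensorProduct.induction_on with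
          | zero => simp
          | add => simp_all [add_tmul, tmul_add]
          | tmul c z => simp [← smul_tmul', smul_smul]
  refine TensorProduct.ext_threefold' fun m n p => ?_
  have h := LinearMap.congr_fun (contract₃_comp_map
    (σ ∘ₗ rTensor C (rightHit σ) ∘ₗ (TensorProduct.assoc k (C ⊗[k] C) C C).symm.toLinearMap)
    Coalgebra.comul LinearMap.id LinearMap.id) (ρ m ⊗ₜ (ρ n ⊗ₜ ρ p))
  simp only [LinearMap.comp_apply, map_tmul, LinearMap.lTensor_id, LinearMap.id_apply] at h
  rw [LinearMap.comp_apply, leg12_tmul, fsOperator_tmul, key, hρ.assoc_rTensor_apply, h,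
    LinearMap.comp_assoc, LinearMap.comp_assoc, ← TensorProduct.map_map_comp_assoc_symm_eq,
    LinearMap.rTensor_comp]
  rfl

end Operators

end FSEquation

theorem FS_map_gives_FS_solution_general
    {C : Type*} [AddCommGroup C] [Module k C] [Coalgebra k C]
    (σ : C ⊗[k] C →ₗ[k] k)
    (hσ : ∀ c d : C,
      (TensorProduct.lid k C)
          ((TensorProduct.map (σ ∘ₗ TensorProduct.mk k C C c) LinearMap.id)
            (Coalgebra.comul d)) =
        (TensorProduct.rid k C)
          ((TensorProduct.map LinearMap.id (σ ∘ₗ (TensorProduct.mk k C C).flip d))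
            (Coalgebra.comul c)))
    (ρ : M →ₗ[k] M ⊗[k] C)
    (hcoassoc : (TensorProduct.assoc k M C C).toLinearMap ∘ₗ
        (TensorProduct.map ρ LinearMap.id) ∘ₗ ρ =
      (TensorProduct.map LinearMap.id Coalgebra.comul) ∘ₗ ρ) :
    ∀ R : M ⊗[k] M →ₗ[k] M ⊗[k] M,
      R = (TensorProduct.rid k (M ⊗[k] M)).toLinearMap ∘ₗ
            (TensorProduct.map LinearMap.id σ) ∘ₗ
            (TensorProduct.tensorTensorTensorComm k M C M C).toLinearMap ∘ₗ
            (TensorProduct.map ρ ρ) →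
      leg12 R ∘ₗ leg23 R = leg23 R ∘ₗ leg13 R ∧
        leg23 R ∘ₗ leg13 R = leg13 R ∘ₗ leg12 R := by
  intro R hR
  obtain rfl : R = FSEquation.fsOperator σ ρ := hR
  have hσ' : FSEquation.IsFSMap σ := FSEquation.isFSMap_of_apply σ hσ
  refine ⟨?_, ?_⟩
  · rw [FSEquation.leg12_comp_leg23 σ ρ hcoassoc, FSEquation.leg23_comp_leg13 σ ρ hcoassoc, hσ']
  · rw [FSEquation.leg23_comp_leg13 σ ρ hcoassoc, FSEquation.leg13_comp_leg12 σ ρ hcoassoc,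
      hσ'.comp_rTensor_rightHit]

/-- If `σ : C ⊗ C → k` is an FS-map on a coalgebra `C` and `M` is a right
`C`-comodule, then `R_σ(m ⊗ n) = Σ σ(m₁ ⊗ n₁) m₀ ⊗ n₀` satisfies the FS-equation. -/
theorem FS_map_gives_FS_solution
    {C : Type*} [AddCommGroup C] [Module k C] [Coalgebra k C]
    (σ : C ⊗[k] C →ₗ[k] k)
    (hσ : ∀ c d : C,
      (TensorProduct.lid k C)
          ((TensorProduct.map (σ ∘ₗ TensorProduct.mk k C C c) LinearMap.id)
            (Coalgebra.comul d)) =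
        (TensorProduct.rid k C)
          ((TensorProduct.map LinearMap.id (σ ∘ₗ (TensorProduct.mk k C C).flip d))
            (Coalgebra.comul c)))
    (ρ : M →ₗ[k] M ⊗[k] C)
    (hcoassoc : (TensorProduct.assoc k M C C).toLinearMap ∘ₗ
        (TensorProduct.map ρ LinearMap.id) ∘ₗ ρ =
      (TensorProduct.map LinearMap.id Coalgebra.comul) ∘ₗ ρ)
    (hcounit : ∀ m : M,
      (TensorProduct.rid k M)
        ((TensorProduct.map LinearMap.id Coalgebra.counit) (ρ m)) = m) :
    ∀ R : M ⊗[k] M →ₗ[k] M ⊗[k] M,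
      R = (TensorProduct.rid k (M ⊗[k] M)).toLinearMap ∘ₗ
            (TensorProduct.map LinearMap.id σ) ∘ₗ
            (TensorProduct.tensorTensorTensorComm k M C M C).toLinearMap ∘ₗ
            (TensorProduct.map ρ ρ) →
      leg12 R ∘ₗ leg23 R = leg23 R ∘ₗ leg13 R ∧
        leg23 R ∘ₗ leg13 R = leg13 R ∘ₗ leg12 R :=
  FS_map_gives_FS_solution_general σ hσ ρ hcoassoc
end

section
/- Let k be a commutative ring, n a positive integer, φ: {1,…,n} → {1,…,n} a function with φ∘φ = φ, and M = k^n free with basis m₁,…,m_n. Define the k-linear map R^φ: M⊗M → M⊗M by R^φ(m_i⊗m_j) = δ_{ij} Σ_{a,b ∈ φ⁻¹(i)} m_a⊗m_b (the sum over all pairs a,b with φ(a) = φ(b) = i, and 0 when i ≠ j). Then R^φ satisfies the FS-equation: (R^φ)¹²(R^φ)²³ = (R^φ)²³(R^φ)¹³ = (R^φ)¹³(R^φ)¹² on M⊗M⊗M. -/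
open TensorProduct

variable {k M : Type*} [CommRing k] [AddCommGroup M] [Module k M]

/-!
Put `v_i = ∑_{φ a = i} m_a`, so that `R^φ (m_i ⊗ m_j) = δ_ij v_i ⊗ v_i`. Idempotency of `φ` forces
`v_i = 0` unless `φ i = i`; hence the factor `[φ i = j]` produced by expanding `v_j` may be
replaced by `δ_ij`, i.e. `R (m_i ⊗ v_j) = R (m_i ⊗ m_j) = R (v_i ⊗ m_j)`. With these absorption
rules each of `R¹²R²³`, `R²³R¹³`, `R¹³R¹²` sends `m_i ⊗ m_j ⊗ m_l` to `δ_ij δ_jl v_i ⊗ v_i ⊗ v_i`.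
-/

def IsFSSolution (R : M ⊗[k] M →ₗ[k] M ⊗[k] M) : Prop :=
  leg12 R ∘ₗ leg23 R = leg23 R ∘ₗ leg13 R ∧ leg23 R ∘ₗ leg13 R = leg13 R ∘ₗ leg12 R

section Legs

variable (R : M ⊗[k] M →ₗ[k] M ⊗[k] M) (x y z : M)

@[simp]
lemma leg12_tmul : leg12 R (x ⊗ₜ (y ⊗ₜ z)) = TensorProduct.assoc k M M M (R (x ⊗ₜ y) ⊗ₜ z) := by
  simp [leg12]

@[simp]
lemma leg23_tmul : leg23 R (x ⊗ₜ (y ⊗ₜ z)) = x ⊗ₜ R (y ⊗ₜ z) := by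
  simp [leg23]

@[simp]
lemma leg13_tmul :
    leg13 R (x ⊗ₜ (y ⊗ₜ z)) =
      TensorProduct.map LinearMap.id (TensorProduct.comm k M M).toLinearMap
        (TensorProduct.assoc k M M M (R (x ⊗ₜ z) ⊗ₜ y)) := by
  simp [leg13]

end Legs

section Diagonal

variable {ι : Type*} [DecidableEq ι] {R : M ⊗[k] M →ₗ[k] M ⊗[k] M} {e v : ι → M}
  (hR : ∀ i j, R (e i ⊗ₜ e j) = if i = j then v i ⊗ₜ v i else 0)
  (hl : ∀ i j, R (e i ⊗ₜ v j) = R (e i ⊗ₜ e j))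
  (hr : ∀ i j, R (v i ⊗ₜ e j) = R (e i ⊗ₜ e j))

include hR hl in
lemma leg12_comp_leg23_tmul_of_diagonal (i j l : ι) :
    (leg12 R ∘ₗ leg23 R) (e i ⊗ₜ (e j ⊗ₜ e l)) =
      if i = j ∧ j = l then v i ⊗ₜ (v i ⊗ₜ v i) else 0 := by
  by_cases hjl : j = l
  · subst hjl
    by_cases hij : i = j
    · subst hij; simp [hR, hl]
    · simp [hR, hl, hij]
  · simp [hR, hjl]

include hR hl in
lemma leg23_comp_leg13_tmul_of_diagonal (i j l : ι) :
    (leg23 R ∘ₗ leg13 R) (e i ⊗ₜ (e j ⊗ₜ e l)) =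
      if i = j ∧ j = l then v i ⊗ₜ (v i ⊗ₜ v i) else 0 := by
  by_cases hil : i = l
  · subst hil
    by_cases hij : i = j
    · subst hij; simp [hR, hl]
    · simp [hR, hl, Ne.symm hij, hij]
  · have : ¬(i = j ∧ j = l) := fun ⟨hij, hjl⟩ => hil (hij.trans hjl)
    simp [hR, hil, this]

include hR hr in
lemma leg13_comp_leg12_tmul_of_diagonal (i j l : ι) :
    (leg13 R ∘ₗ leg12 R) (e i ⊗ₜ (e j ⊗ₜ e l)) =
      if i = j ∧ j = l then v i ⊗ₜ (v i ⊗ₜ v i) else 0 := by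
  by_cases hij : i = j
  · subst hij
    by_cases hil : i = l
    · subst hil; simp [hR, hr]
    · simp [hR, hr, hil]
  · simp [hR, hij]

end Diagonal

lemma Module.Basis.ext_tmul_tmul {ι N : Type*} [AddCommGroup N] [Module k N]
    (b : Module.Basis ι k M) {f g : M ⊗[k] (M ⊗[k] M) →ₗ[k] N}
    (h : ∀ i j l, f (b i ⊗ₜ (b j ⊗ₜ b l)) = g (b i ⊗ₜ (b j ⊗ₜ b l))) : f = g :=
  (b.tensorProduct (b.tensorProduct b)).ext fun ⟨i, j, l⟩ => by simpa using h i j l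

lemma isFSSolution_of_diagonal {ι : Type*} [DecidableEq ι] {R : M ⊗[k] M →ₗ[k] M ⊗[k] M}
    (b : Module.Basis ι k M) {v : ι → M}
    (hR : ∀ i j, R (b i ⊗ₜ b j) = if i = j then v i ⊗ₜ v i else 0)
    (hl : ∀ i j, R (b i ⊗ₜ v j) = R (b i ⊗ₜ b j))
    (hr : ∀ i j, R (v i ⊗ₜ b j) = R (b i ⊗ₜ b j)) :
    IsFSSolution R :=
  ⟨b.ext_tmul_tmul fun i j l => by
      rw [leg12_comp_leg23_tmul_of_diagonal hR hl, leg23_comp_leg13_tmul_of_diagonal hR hl],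
    b.ext_tmul_tmul fun i j l => by
      rw [leg23_comp_leg13_tmul_of_diagonal hR hl, leg13_comp_leg12_tmul_of_diagonal hR hr]⟩

section Fiber

open Finset

variable {ι : Type*} [Fintype ι] [DecidableEq ι] {φ : ι → ι}

def fiberSum (e : ι → M) (φ : ι → ι) (i : ι) : M :=
  ∑ a ∈ univ.filter (fun a => φ a = i), e a

lemma fiberSum_eq_zero_of_apply_ne (hφ : φ ∘ φ = φ) (e : ι → M) {i : ι} (hi : φ i ≠ i) :
    fiberSum e φ i = 0 := by
  refine sum_eq_zero fun a ha => absurd ?_ hi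
  rw [(mem_filter.1 ha).2.symm]
  exact congrFun hφ a

lemma fiberSum_tmul_fiberSum (e : ι → M) (i j : ι) :
    fiberSum e φ i ⊗ₜ[k] fiberSum e φ j =
      ∑ a ∈ univ.filter (fun a => φ a = i), ∑ b ∈ univ.filter (fun b => φ b = j), e a ⊗ₜ e b := by
  rw [fiberSum, fiberSum, sum_tmul]
  exact sum_congr rfl fun a _ => tmul_sum _ _ _

variable {R : M ⊗[k] M →ₗ[k] M ⊗[k] M} {e : ι → M}
  (hR : ∀ i j, R (e i ⊗ₜ e j) = if i = j then fiberSum e φ i ⊗ₜ fiberSum e φ i else 0)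

include hR in
lemma apply_tmul_fiberSum (hφ : φ ∘ φ = φ) (i j : ι) :
    R (e i ⊗ₜ fiberSum e φ j) = R (e i ⊗ₜ e j) := by
  rw [fiberSum, tmul_sum, map_sum]
  by_cases hi : φ i = i
  · simp [hR, hi]
  · simp [hR, fiberSum_eq_zero_of_apply_ne hφ e hi]

include hR in
lemma apply_fiberSum_tmul (hφ : φ ∘ φ = φ) (i j : ι) :
    R (fiberSum e φ i ⊗ₜ e j) = R (e i ⊗ₜ e j) := by
  rw [fiberSum, sum_tmul, map_sum]
  rcases eq_or_ne i j with rfl | hij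
  · by_cases hi : φ i = i
    · simp [hR, hi]
    · simp [hR, fiberSum_eq_zero_of_apply_ne hφ e hi]
  · by_cases hj : φ j = j
    · simp [hR, hj, hij, hij.symm]
    · simp [hR, fiberSum_eq_zero_of_apply_ne hφ e hj, hij]

end Fiber

open Finset in
theorem idempotent_function_gives_FS_solution_general
    {n : ℕ} (φ : Fin n → Fin n) (hφ : φ ∘ φ = φ)
    (R : (Fin n → k) ⊗[k] (Fin n → k) →ₗ[k] (Fin n → k) ⊗[k] (Fin n → k))
    (hR : ∀ i j : Fin n,
      R ((Pi.basisFun k (Fin n)) i ⊗ₜ[k] (Pi.basisFun k (Fin n)) j) =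
        if i = j then
          ∑ a ∈ univ.filter (fun a => φ a = i), ∑ b ∈ univ.filter (fun b => φ b = i),
            (Pi.basisFun k (Fin n)) a ⊗ₜ[k] (Pi.basisFun k (Fin n)) b
        else 0) :
    leg12 R ∘ₗ leg23 R = leg23 R ∘ₗ leg13 R ∧
      leg23 R ∘ₗ leg13 R = leg13 R ∘ₗ leg12 R := by
  set e := Pi.basisFun k (Fin n)
  have hdiag : ∀ i j, R (e i ⊗ₜ e j) =
      if i = j then fiberSum e φ i ⊗ₜ fiberSum e φ i else 0 := fun i j => by
    rw [hR, fiberSum_tmul_fiberSum]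
  exact isFSSolution_of_diagonal e hdiag (apply_tmul_fiberSum hdiag hφ)
    (apply_fiberSum_tmul hdiag hφ)

open Finset in
/-- For an idempotent map `φ : {1,…,n} → {1,…,n}`, the map
`R^φ(m_i ⊗ m_j) = δ_{ij} Σ_{a,b ∈ φ⁻¹(i)} m_a ⊗ m_b` satisfies the FS-equation. -/
theorem idempotent_function_gives_FS_solution
    {n : ℕ} (hn : 0 < n) (φ : Fin n → Fin n) (hφ : φ ∘ φ = φ)
    (R : (Fin n → k) ⊗[k] (Fin n → k) →ₗ[k] (Fin n → k) ⊗[k] (Fin n → k))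
    (hR : ∀ i j : Fin n,
      R ((Pi.basisFun k (Fin n)) i ⊗ₜ[k] (Pi.basisFun k (Fin n)) j) =
        if i = j then
          ∑ a ∈ univ.filter (fun a => φ a = i), ∑ b ∈ univ.filter (fun b => φ b = i),
            (Pi.basisFun k (Fin n)) a ⊗ₜ[k] (Pi.basisFun k (Fin n)) b
        else 0) :
    leg12 R ∘ₗ leg23 R = leg23 R ∘ₗ leg13 R ∧
      leg23 R ∘ₗ leg13 R = leg13 R ∘ₗ leg12 R :=
  idempotent_function_gives_FS_solution_general φ hφ R hR
end
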